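/- Fix d ≥ 2. Let A_1 = B_1 = A_2 = B_2 = Fin d and P = F = Fin d × Fin 2. Define the vector v indexed by P × A_1 × B_1 × A_2 × B_2 × F by v((m,c),a_1,b_1,a_2,b_2,(n,c')) = [c = 0 and c' = 0 and a_1 = m and a_2 = b_1 and n = b_2] + [c = 1 and c' = 1 and b_2 = m and b_1 = a_2 and a_1 = n] (Iverson brackets), and let R be the rank-one PSD matrix with entries R(u,u') = v(u)·conj(v(u')) (the Choi operator of the flippable quantum SWITCH). Then R is not an ordinary bipartite process matrix: there exist quantum channel Choi operators C_1 (PSD, indexed by A_1 × B_1, with Tr_{B_1}[C_1] = 1_{A_1}) and C_2 (PSD, indexed by A_2 × B_2, with Tr_{B_2}[C_2] = 1_{A_2}) such that the matrix W indexed by P × F with entries W((p,f),(p',f')) = Σ R((p,a_1,b_1,a_2,b_2,f),(p',a_1',b_1',a_2',b_2',f'))·C_1((a_1,b_1),(a_1',b_1'))·C_2((a_2,b_2),(a_2',b_2')) (sum over all primed and unprimed a,b indices) satisfies Tr_F[W] ≠ 1_P. -/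
import Mathlib


open Matrix ComplexOrder

/-- The vector defining the flippable quantum SWITCH: for
`u = ((m,c), a1, b1, a2, b2, (n,c'))`,
`v u = [c = 0 ∧ c' = 0 ∧ a1 = m ∧ a2 = b1 ∧ n = b2] + [c = 1 ∧ c' = 1 ∧ b2 = m ∧ b1 = a2 ∧ a1 = n]`. -/
noncomputable def flipSwitchVec (d : ℕ) :
    ((Fin d × Fin 2) × Fin d × Fin d × Fin d × Fin d × (Fin d × Fin 2)) → ℂ :=
  fun u =>
    (if u.1.2 = 0 ∧ u.2.2.2.2.2.2 = 0 ∧ u.2.1 = u.1.1 ∧ u.2.2.2.1 = u.2.2.1 ∧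
        u.2.2.2.2.2.1 = u.2.2.2.2.1 then 1 else 0) +
    (if u.1.2 = 1 ∧ u.2.2.2.2.2.2 = 1 ∧ u.2.2.2.2.1 = u.1.1 ∧ u.2.2.1 = u.2.2.2.1 ∧
        u.2.1 = u.2.2.2.2.2.1 then 1 else 0)

/-- The Choi operator of the flippable quantum SWITCH. -/
noncomputable def flipSwitchChoi (d : ℕ) :
    Matrix ((Fin d × Fin 2) × Fin d × Fin d × Fin d × Fin d × (Fin d × Fin 2))
      ((Fin d × Fin 2) × Fin d × Fin d × Fin d × Fin d × (Fin d × Fin 2)) ℂ :=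
  Matrix.of fun u u' => flipSwitchVec d u * (starRingEnd ℂ) (flipSwitchVec d u')

/-- The result `W` of plugging two channels `C1`, `C2` into a bipartite supermap `R`. -/
noncomputable def link2PF {P A1 B1 A2 B2 F : Type*}
    [Fintype A1] [Fintype B1] [Fintype A2] [Fintype B2]
    (R : Matrix (P × A1 × B1 × A2 × B2 × F) (P × A1 × B1 × A2 × B2 × F) ℂ)
    (C1 : Matrix (A1 × B1) (A1 × B1) ℂ) (C2 : Matrix (A2 × B2) (A2 × B2) ℂ) :
    Matrix (P × F) (P × F) ℂ :=
  Matrix.of fun (u u' : P × F) =>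
    ∑ a1 : A1, ∑ b1 : B1, ∑ a2 : A2, ∑ b2 : B2,
    ∑ a1' : A1, ∑ b1' : B1, ∑ a2' : A2, ∑ b2' : B2,
      R (u.1, a1, b1, a2, b2, u.2) (u'.1, a1', b1', a2', b2', u'.2) *
        C1 (a1, b1) (a1', b1') * C2 (a2, b2) (a2', b2')


set_option maxHeartbeats 1600000 in
/-- for `d ≥ 2`, the flippable quantum SWITCH is not an ordinary bipartite
process matrix: there exist (not necessarily bistochastic) channel Choi operators `C1`,
`C2` such that `Tr_F[W] ≠ 1_P`. -/
theorem stmt10 (d : ℕ) (hd : 2 ≤ d) :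
    ∃ (C1 C2 : Matrix (Fin d × Fin d) (Fin d × Fin d) ℂ),
      C1.PosSemidef ∧
      (∀ a a', (∑ b : Fin d, C1 (a, b) (a', b)) = if a = a' then 1 else 0) ∧
      C2.PosSemidef ∧
      (∀ a a', (∑ b : Fin d, C2 (a, b) (a', b)) = if a = a' then 1 else 0) ∧
      ¬ (∀ p p' : Fin d × Fin 2,
          (∑ f : Fin d × Fin 2, link2PF (flipSwitchChoi d) C1 C2 (p, f) (p', f)) =
            if p = p' then 1 else 0) := by
  have hd0 : 0 < d := by omega
  set C1 : Matrix (Fin d × Fin d) (Fin d × Fin d) ℂ :=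
    Matrix.of (fun u u' => if u.1 = u'.1 ∧ u.2 = (⟨0, hd0⟩ : Fin d) ∧ u'.2 = ⟨0, hd0⟩ then 1 else 0) with hC1
  set C2 : Matrix (Fin d × Fin d) (Fin d × Fin d) ℂ :=
    Matrix.of (fun u u' => if u.1 = u.2 ∧ u'.1 = u'.2 then 1 else 0) with hC2
  refine ⟨C1, C2, ?_, ?_, ?_, ?_, ?_⟩
  · have : C1 = (Matrix.of fun (i : Fin d) (u : Fin d × Fin d) =>
        if u.1 = i ∧ u.2 = ⟨0, hd0⟩ then (1:ℂ) else 0)ᴴ *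
        (Matrix.of fun (i : Fin d) (u : Fin d × Fin d) =>
        if u.1 = i ∧ u.2 = ⟨0, hd0⟩ then (1:ℂ) else 0) := by
      ext u u'
      simp only [hC1, Matrix.mul_apply, Matrix.conjTranspose_apply, Matrix.of_apply,
        apply_ite (star : ℂ → ℂ), star_one, star_zero, ite_mul, mul_ite, mul_one, mul_zero,
        zero_mul, ite_and, Finset.sum_ite_eq, Finset.mem_univ, if_true]
      aesop
    rw [this]
    exact Matrix.posSemidef_conjTranspose_mul_self _
  · intro a a'
    simp only [hC1, Matrix.of_apply]
    simp [ite_and, Finset.sum_ite_eq]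
  · have : C2 = (Matrix.of fun (_ : Fin 1) (u : Fin d × Fin d) =>
        if u.1 = u.2 then (1:ℂ) else 0)ᴴ *
        (Matrix.of fun (_ : Fin 1) (u : Fin d × Fin d) =>
        if u.1 = u.2 then (1:ℂ) else 0) := by
      ext u u'
      simp only [hC2, Matrix.mul_apply, Matrix.conjTranspose_apply, Matrix.of_apply,
        apply_ite (star : ℂ → ℂ), star_one, star_zero, ite_mul, mul_ite, mul_one, mul_zero,
        zero_mul, ite_and, Finset.sum_const, Finset.card_univ, Fintype.card_fin]
      aesop
    rw [this]
    exact Matrix.posSemidef_conjTranspose_mul_self _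
  · intro a a'
    simp only [hC2, Matrix.of_apply]
    simp [ite_and, Finset.sum_ite_eq]
    exact if_congr eq_comm rfl rfl
  · intro h
    have key := h (⟨0, hd0⟩, 1) (⟨0, hd0⟩, 1)
    rw [if_pos rfl] at key
    have : (∑ f : Fin d × Fin 2, link2PF (flipSwitchChoi d) C1 C2 ((⟨0, hd0⟩, 1), f) ((⟨0, hd0⟩, 1), f)) = (d : ℂ) := by
      simp only [hC1, hC2, link2PF, flipSwitchChoi, flipSwitchVec, Matrix.of_apply]
      simp only [show ¬((1 : Fin 2) = 0) from by decide, false_and, if_false, zero_add]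
      simp only [apply_ite (starRingEnd ℂ), _root_.map_one, _root_.map_zero, ite_mul, mul_ite,
        mul_one, mul_zero, zero_mul, one_mul, ite_and, Finset.sum_ite_eq, Finset.sum_ite_eq',
        Finset.mem_univ, if_true, Finset.sum_ite_irrel, Finset.sum_const_zero, true_and]
      rw [Fintype.sum_prod_type]
      simp [Finset.sum_ite_eq']
    rw [this] at key
    have : (d : ℂ) ≠ 1 := by
      intro hcon
      have : d = 1 := by exact_mod_cast hcon
      omega
    exact this key
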